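/- Let F(x,y,z,t) = (x − z)² + (y − t)² + R(z,t) where R ∈ C[z,t] is nonzero of degree at most 2. Then F is Cartesian if and only if there exists c ∈ C such that R(z,t) is divisible by (z + it − c) or by (z − it − c) in C[z,t]. -/

import Mathlib

/-!
If `F = G(x,y) F₁ + H(z,t) F₂` with `G`, `H` non-constant, then `F` vanishes on `Z(G) × Z(H)`, and
both zero sets are infinite. So every `q ∈ Z(H)` is the centre of a circle of squared radius
`-R(q)` through all of `Z(G)`. Comparing two such circles puts `Z(G)` on a line, and a line meeting
a circle in infinitely many points is isotropic (direction `(1, ±i)`) and passes through its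
centre, where the squared radius is then `0`. Hence all of `Z(H)` lies on one isotropic line
`z ± it = c`, on which `R` vanishes, so `z ± it - c` divides `R`. Conversely `(x - z)² + (y - t)²`
is divisible by `(x ± iy) - (z ± it)`, which makes `F` Cartesian once `z ± it - c` divides `R`.
-/

open MvPolynomial

/-- A polynomial `P ∈ ℂ[x,y,z,t]` is Cartesian if `P = G(x,y)·F1 + H(z,t)·F2`
with `G`, `H` non-constant. -/
def IsCartesian (P : MvPolynomial (Fin 4) ℂ) : Prop :=
  ∃ (G H : MvPolynomial (Fin 2) ℂ) (F1 F2 : MvPolynomial (Fin 4) ℂ),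
    (∀ c : ℂ, G ≠ MvPolynomial.C c) ∧ (∀ c : ℂ, H ≠ MvPolynomial.C c) ∧
    P = MvPolynomial.rename (![0, 1] : Fin 2 → Fin 4) G * F1
        + MvPolynomial.rename (![2, 3] : Fin 2 → Fin 4) H * F2

namespace MvPolynomial

theorem polynomial_eval_aeval {σ K : Type*} [CommSemiring K] (f : σ → Polynomial K) (b : K)
    (G : MvPolynomial σ K) :
    (aeval f G).eval b = eval (fun i => (f i).eval b) G := by
  simpa using comp_aeval_apply f (Polynomial.aeval b) G

theorem infinite_setOf_eval_eq_zero_of_ne_C {K : Type*} [Field K] [IsAlgClosed K]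
    {G : MvPolynomial (Fin 2) K} (hG : ∀ c, G ≠ C c) : {p : Fin 2 → K | eval p G = 0}.Infinite := by
  set row : K → Polynomial K := fun b => aeval ![Polynomial.X, Polynomial.C b] G
  set col : K → Polynomial K := fun a => aeval ![Polynomial.C a, Polynomial.X] G
  have eval_row (a b : K) : (row b).eval a = eval ![a, b] G := by
    simp only [row, polynomial_eval_aeval]; congr; ext i; fin_cases i <;> simp
  have eval_col (a b : K) : (col a).eval b = eval ![a, b] G := by
    simp only [col, polynomial_eval_aeval]; congr; ext i; fin_cases i <;> simp
  intro hfin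
  -- off the finitely many abscissae of zeros, the columns have no root, hence are constant
  have hcol : ∀ a ∉ (· 0) '' {p | eval p G = 0}, ∀ b, eval ![a, b] G = eval ![a, 0] G := by
    intro a ha b
    have hroots : (col a).roots = 0 := Multiset.eq_zero_of_forall_notMem fun y hy =>
      ha ⟨![a, y], by simpa [eval_col] using (Polynomial.mem_roots'.mp hy).2, rfl⟩
    rw [← eval_col, ← eval_col, IsAlgClosed.roots_eq_zero_iff.mp hroots]
    simp
  have hrow (b : K) : row b = row 0 := sub_eq_zero.mp <| Polynomial.eq_zero_of_infinite_isRoot _ <|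
    ((hfin.image (· 0)).infinite_compl).mono fun a ha => by
      simp [eval_row, hcol a ha b]
  -- a root `a` of `row 0` would put the whole vertical line `x = a` into the zero set
  have hroots : (row 0).roots = 0 := by
    refine Multiset.eq_zero_of_forall_notMem fun a ha => ?_
    have hline : ∀ b, ![a, b] ∈ {p | eval p G = 0} := fun b => by
      simpa [← eval_row, hrow b] using (Polynomial.mem_roots'.mp ha).2
    exact Set.infinite_range_of_injective (fun b b' h => by simpa using congrFun h 1)
      (hfin.subset (Set.range_subset_iff.mpr hline))
  refine hG ((row 0).coeff 0) (MvPolynomial.funext fun x => ?_)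
  have hx : ![x 0, x 1] = x := FinVec.etaExpand_eq x
  rw [← hx, ← eval_row, hrow, IsAlgClosed.roots_eq_zero_iff.mp hroots]
  simp

theorem dvd_sub_aeval {σ R : Type*} [CommRing R] {L : MvPolynomial σ R}
    {f : σ → MvPolynomial σ R} (h : ∀ i, L ∣ X i - f i) (P : MvPolynomial σ R) :
    L ∣ P - aeval f P := by
  let π := Ideal.Quotient.mkₐ R (Ideal.span {L})
  have hπ : π.comp (AlgHom.id R _) = π.comp (aeval f) := algHom_ext fun i =>
    Ideal.Quotient.eq.mpr (Ideal.mem_span_singleton.mpr (by simpa using h i))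
  exact Ideal.mem_span_singleton.mp (Ideal.Quotient.eq.mp (AlgHom.congr_fun hπ P))

theorem dvd_of_infinite_zeros_on_line {K : Type*} [CommRing K] [IsDomain K] {ε c : K}
    {R : MvPolynomial (Fin 2) K} (h : {y | eval ![c - ε * y, y] R = 0}.Infinite) :
    X 0 + C ε * X 1 - C c ∣ R := by
  set line : Fin 2 → Polynomial K :=
    ![Polynomial.C c - Polynomial.C ε * Polynomial.X, Polynomial.X]
  set shift : Fin 2 → MvPolynomial (Fin 2) K := ![C c - C ε * X 1, X 1]
  have eval_line (y : K) : (fun i => (line i).eval y) = ![c - ε * y, y] := by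
    ext i; fin_cases i <;> simp [line]
  have aeval_line : (fun i => Polynomial.aeval (X 1) (line i)) = shift := by
    ext i : 1; fin_cases i <;> simp [line, shift, algebraMap_eq]
  -- `R(c - ε y, y)` is a polynomial in `y` alone, with infinitely many roots
  have hline : aeval line R = 0 := Polynomial.eq_zero_of_infinite_isRoot _ <| h.mono fun y hy => by
    simpa [polynomial_eval_aeval, eval_line] using hy
  have hshift : aeval shift R = 0 := by
    rw [← aeval_line, ← comp_aeval_apply, hline, map_zero]
  have := dvd_sub_aeval (L := X 0 + C ε * X 1 - C c) (f := shift)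
    (fun i => by fin_cases i <;> simp [shift, sub_sub_eq_add_sub]) R
  rwa [hshift, sub_zero] at this

theorem X_add_C_mul_X_sub_C_ne_C {R : Type*} [CommRing R] [Nontrivial R] (a c c' : R) :
    (X 0 + C a * X 1 - C c : MvPolynomial (Fin 2) R) ≠ C c' := fun h => by
  have h₀ := congrArg (eval ![c, 0]) h
  have h₁ := congrArg (eval ![c + 1, 0]) h
  simp only [map_sub, map_add, map_mul, eval_X, eval_C, Matrix.cons_val_zero,
    Matrix.cons_val_one, Matrix.cons_val_fin_one, mul_zero, add_zero, sub_self,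
    add_sub_cancel_left] at h₀ h₁
  exact one_ne_zero (h₁.trans h₀.symm)

end MvPolynomial

theorem eq_zero_of_infinite_roots_quadratic {K : Type*} [CommRing K] [IsDomain K] {S : Set K}
    (hS : S.Infinite) {a b c : K} (h : ∀ s ∈ S, a * s ^ 2 + b * s + c = 0) :
    a = 0 ∧ b = 0 ∧ c = 0 := by
  have hp := Polynomial.eq_zero_of_infinite_isRoot
    (Polynomial.C a * Polynomial.X ^ 2 + Polynomial.C b * Polynomial.X + Polynomial.C c)
    (hS.mono fun s hs => by simpa using h s hs)
  refine ⟨?_, ?_, ?_⟩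
  · simpa using congrArg (Polynomial.coeff · 2) hp
  · simpa using congrArg (Polynomial.coeff · 1) hp
  · simpa using congrArg (Polynomial.coeff · 0) hp

section PlaneGeometry

variable {K : Type*} [Field K]

theorem exists_smul_of_mul_add_mul_eq_zero {u w : Fin 2 → K} (hu : u ≠ 0)
    (h : u 0 * w 0 + u 1 * w 1 = 0) : ∃ s : K, w = s • ![-u 1, u 0] := by
  by_cases hu0 : u 0 = 0
  · have hu1 : u 1 ≠ 0 := fun hu1 => hu (by ext i; fin_cases i <;> simp [hu0, hu1])
    have hw1 : w 1 = 0 := by simpa [hu0, hu1] using h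
    refine ⟨-w 0 / u 1, ?_⟩
    ext i; fin_cases i <;> simp [hu0, hw1]; field_simp
  · refine ⟨w 1 / u 0, ?_⟩
    ext i; fin_cases i <;> simp <;> field_simp
    linear_combination h

theorem sq_div_eq_neg_one_of_sq_add_sq_eq_zero {v : Fin 2 → K} (hv : v ≠ 0)
    (hQ : v 0 ^ 2 + v 1 ^ 2 = 0) : v 0 ≠ 0 ∧ (v 1 / v 0) ^ 2 = -1 := by
  have hv0 : v 0 ≠ 0 := fun hv0 => hv <| by
    have hv1 : v 1 = 0 := by simpa [hv0] using hQ
    ext i; fin_cases i <;> simp [hv0, hv1]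
  refine ⟨hv0, ?_⟩
  field_simp
  linear_combination hQ

variable [NeZero (2 : K)]

theorem isotropic_of_infinite_inter_circle {T : Set K} (hT : T.Infinite) {p₀ v q : Fin 2 → K}
    {k : K} (h : ∀ s ∈ T, (p₀ 0 + s * v 0 - q 0) ^ 2 + (p₀ 1 + s * v 1 - q 1) ^ 2 = k) :
    v 0 ^ 2 + v 1 ^ 2 = 0 ∧ v 0 * (p₀ 0 - q 0) + v 1 * (p₀ 1 - q 1) = 0 := by
  obtain ⟨ha, hb, -⟩ := eq_zero_of_infinite_roots_quadratic hT
    (a := v 0 ^ 2 + v 1 ^ 2) (b := 2 * (v 0 * (p₀ 0 - q 0) + v 1 * (p₀ 1 - q 1)))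
    (c := (p₀ 0 - q 0) ^ 2 + (p₀ 1 - q 1) ^ 2 - k) fun s hs => by linear_combination h s hs
  exact ⟨ha, (mul_eq_zero.mp hb).resolve_left two_ne_zero⟩

theorem exists_isotropic_line {A B : Set (Fin 2 → K)} {r : (Fin 2 → K) → K} (hA : A.Infinite)
    (hB : B.Nontrivial) (h : ∀ p ∈ A, ∀ q ∈ B, (p 0 - q 0) ^ 2 + (p 1 - q 1) ^ 2 + r q = 0) :
    ∃ ε c : K, ε ^ 2 = -1 ∧ ∀ q ∈ B, q 0 + ε * q 1 = c ∧ r q = 0 := by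
  obtain ⟨p₀, hp₀⟩ := hA.nonempty
  obtain ⟨q₁, hq₁, q₂, hq₂, hq₁₂⟩ := hB
  have hu : q₂ - q₁ ≠ 0 := sub_ne_zero.mpr hq₁₂.symm
  set v : Fin 2 → K := ![-(q₂ - q₁) 1, (q₂ - q₁) 0]
  have hv : v ≠ 0 := fun hv => hu <| by
    have h₀ : (q₂ - q₁) 1 = 0 := neg_eq_zero.mp (congrFun hv 0)
    have h₁ : (q₂ - q₁) 0 = 0 := congrFun hv 1
    ext i; fin_cases i <;> assumption
  -- `r` cancels from the four relations between `p, p₀ ∈ A` and `q₁, q₂ ∈ B`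
  have hline (p) (hp : p ∈ A) : ∃ s : K, p - p₀ = s • v := by
    refine exists_smul_of_mul_add_mul_eq_zero hu ?_
    have h2 : 2 * ((q₂ - q₁) 0 * (p - p₀) 0 + (q₂ - q₁) 1 * (p - p₀) 1) = 0 := by
      simp only [Pi.sub_apply]
      linear_combination h p hp q₁ hq₁ - h p hp q₂ hq₂ - h p₀ hp₀ q₁ hq₁ + h p₀ hp₀ q₂ hq₂
    exact (mul_eq_zero.mp h2).resolve_left two_ne_zero
  have hT : {s : K | p₀ + s • v ∈ A}.Infinite := by
    refine Set.Infinite.of_image (fun s => p₀ + s • v) (hA.mono fun p hp => ?_)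
    obtain ⟨s, hs⟩ := hline p hp
    exact ⟨s, by simpa [← hs] using hp, by simp [← hs]⟩
  have hcircle (q) (hq : q ∈ B) := isotropic_of_infinite_inter_circle hT (q := q) (k := -r q)
    fun s hs => by simpa using eq_neg_of_add_eq_zero_left (h _ hs q hq)
  obtain ⟨hv₀, hε⟩ := sq_div_eq_neg_one_of_sq_add_sq_eq_zero hv (hcircle q₁ hq₁).1
  refine ⟨v 1 / v 0, p₀ 0 + v 1 / v 0 * p₀ 1, hε, fun q hq => ?_⟩
  have hl : p₀ 0 - q 0 + v 1 / v 0 * (p₀ 1 - q 1) = 0 := by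
    field_simp
    linear_combination (hcircle q hq).2
  refine ⟨by linear_combination -hl, ?_⟩
  linear_combination h p₀ hp₀ q hq - (p₀ 0 - q 0 - v 1 / v 0 * (p₀ 1 - q 1)) * hl
    - (p₀ 1 - q 1) ^ 2 * hε

end PlaneGeometry

noncomputable def distSqAdd (R : MvPolynomial (Fin 2) ℂ) : MvPolynomial (Fin 4) ℂ :=
  (X 0 - X 2) ^ 2 + (X 1 - X 3) ^ 2 + rename ![2, 3] R

theorem isCartesian_distSqAdd_of_dvd {R : MvPolynomial (Fin 2) ℂ} {ε c : ℂ} (hε : ε ^ 2 = -1)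
    (h : X 0 + C ε * X 1 - C c ∣ R) : IsCartesian (distSqAdd R) := by
  obtain ⟨S, rfl⟩ := h
  -- `(x - z)² + (y - t)² = (L(x, y) - L(z, t)) (x - z - ε (y - t))` for `L = x + ε y`
  set M : MvPolynomial (Fin 4) ℂ := X 0 - C ε * X 1 - X 2 + C ε * X 3
  refine ⟨_, _, M, rename ![2, 3] S - M, X_add_C_mul_X_sub_C_ne_C ε c,
    X_add_C_mul_X_sub_C_ne_C ε c, ?_⟩
  have hε' : (C ε : MvPolynomial (Fin 4) ℂ) ^ 2 = -1 := by rw [← map_pow, hε, map_neg, map_one]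
  simp only [distSqAdd, M, map_mul, map_sub, map_add, rename_X, rename_C, Matrix.cons_val_zero,
    Matrix.cons_val_one, Matrix.cons_val_fin_one]
  linear_combination ((X 1 : MvPolynomial (Fin 4) ℂ) - X 3) ^ 2 * hε'

theorem eval_distSqAdd_eq_zero {R G H : MvPolynomial (Fin 2) ℂ} {F1 F2 : MvPolynomial (Fin 4) ℂ}
    (hF : distSqAdd R = rename ![0, 1] G * F1 + rename ![2, 3] H * F2) {p q : Fin 2 → ℂ}
    (hp : eval p G = 0) (hq : eval q H = 0) :
    (p 0 - q 0) ^ 2 + (p 1 - q 1) ^ 2 + eval q R = 0 := by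
  have hp' : (![p 0, p 1, q 0, q 1] ∘ ![0, 1] : Fin 2 → ℂ) = p := by ext i; fin_cases i <;> rfl
  have hq' : (![p 0, p 1, q 0, q 1] ∘ ![2, 3] : Fin 2 → ℂ) = q := by ext i; fin_cases i <;> rfl
  simpa [distSqAdd, eval_rename, hp', hq', hp, hq] using congrArg (eval ![p 0, p 1, q 0, q 1]) hF

theorem exists_dvd_of_isCartesian_distSqAdd {R : MvPolynomial (Fin 2) ℂ}
    (h : IsCartesian (distSqAdd R)) : ∃ ε c : ℂ, ε ^ 2 = -1 ∧ X 0 + C ε * X 1 - C c ∣ R := by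
  obtain ⟨G, H, F1, F2, hG, hH, hF⟩ := h
  have hZH := infinite_setOf_eval_eq_zero_of_ne_C hH
  obtain ⟨ε, c, hε, hline⟩ := exists_isotropic_line (infinite_setOf_eval_eq_zero_of_ne_C hG)
    hZH.nontrivial fun p hp q hq => eval_distSqAdd_eq_zero hF hp hq
  refine ⟨ε, c, hε, dvd_of_infinite_zeros_on_line <|
    (Set.Infinite.image (f := (· 1)) (fun q hq q' hq' h => ?_) hZH).mono ?_⟩
  · have h₀ : q 0 = q' 0 := by linear_combination (hline q hq).1 - (hline q' hq').1 - ε * h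
    ext i; fin_cases i
    exacts [h₀, h]
  · rintro _ ⟨q, hq, rfl⟩
    have hq' : ![c - ε * q 1, q 1] = q := by
      rw [← (hline q hq).1, add_sub_cancel_right]; exact FinVec.etaExpand_eq q
    simpa [hq'] using (hline q hq).2

theorem isCartesian_distSqAdd_iff (R : MvPolynomial (Fin 2) ℂ) :
    IsCartesian (distSqAdd R) ↔ ∃ ε c : ℂ, ε ^ 2 = -1 ∧ X 0 + C ε * X 1 - C c ∣ R :=
  ⟨exists_dvd_of_isCartesian_distSqAdd, fun ⟨_, _, hε, h⟩ => isCartesian_distSqAdd_of_dvd hε h⟩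

theorem cartesian_iff_linear_factor_general
    (R : MvPolynomial (Fin 2) ℂ) :
    IsCartesian
      ((MvPolynomial.X 0 - MvPolynomial.X 2) ^ 2
        + (MvPolynomial.X 1 - MvPolynomial.X 3) ^ 2
        + MvPolynomial.rename (![2, 3] : Fin 2 → Fin 4) R) ↔
    ∃ c : ℂ,
      ((MvPolynomial.X 0 + MvPolynomial.C Complex.I * MvPolynomial.X 1
          - MvPolynomial.C c : MvPolynomial (Fin 2) ℂ) ∣ R) ∨
      ((MvPolynomial.X 0 - MvPolynomial.C Complex.I * MvPolynomial.X 1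
          - MvPolynomial.C c : MvPolynomial (Fin 2) ℂ) ∣ R) := by
  have hneg (c : ℂ) : (X 0 - C Complex.I * X 1 - C c : MvPolynomial (Fin 2) ℂ)
      = X 0 + C (-Complex.I) * X 1 - C c := by
    rw [map_neg, neg_mul, ← sub_eq_add_neg]
  refine (isCartesian_distSqAdd_iff R).trans ⟨?_, ?_⟩
  · rintro ⟨ε, c, hε, h⟩
    rcases sq_eq_sq_iff_eq_or_eq_neg.mp (hε.trans Complex.I_sq.symm) with rfl | rfl
    exacts [⟨c, .inl h⟩, ⟨c, .inr (hneg c ▸ h)⟩]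
  · rintro ⟨c, h | h⟩
    exacts [⟨_, c, Complex.I_sq, h⟩, ⟨_, c, by rw [neg_sq, Complex.I_sq], hneg c ▸ h⟩]

/-- `F = (x − z)² + (y − t)² + R(z,t)` with `R ≠ 0` of degree at most 2 is Cartesian
iff `R` is divisible by `z + it − c` or `z − it − c` for some `c ∈ ℂ`. -/
theorem cartesian_iff_linear_factor
    (R : MvPolynomial (Fin 2) ℂ) (hR0 : R ≠ 0) (hRdeg : R.totalDegree ≤ 2) :
    IsCartesian
      ((MvPolynomial.X 0 - MvPolynomial.X 2) ^ 2
        + (MvPolynomial.X 1 - MvPolynomial.X 3) ^ 2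
        + MvPolynomial.rename (![2, 3] : Fin 2 → Fin 4) R) ↔
    ∃ c : ℂ,
      ((MvPolynomial.X 0 + MvPolynomial.C Complex.I * MvPolynomial.X 1
          - MvPolynomial.C c : MvPolynomial (Fin 2) ℂ) ∣ R) ∨
      ((MvPolynomial.X 0 - MvPolynomial.C Complex.I * MvPolynomial.X 1
          - MvPolynomial.C c : MvPolynomial (Fin 2) ℂ) ∣ R) :=
  cartesian_iff_linear_factor_general R
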